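/- arXiv:2306.13180 — 13 statements merged into one kernel-verified Lean document; each statement's English description precedes it below -/
import Mathlib

section
/- Let R be a commutative ring, x ∈ R a non-zero-divisor, and g : R → R' a ring homomorphism with g(x) a non-zero-divisor in R'. Then the induced square of localizations (R → R_x, R → R', R' → R'_{g(x)}, R_x → R'_{g(x)}) is cartesian (i.e., the sequence 0 → R → R_x ⊕ R' → R'_{g(x)} given by r ↦ (r/1, g(r)) and (a, b) ↦ a - b is exact) if and only if the induced map ḡ : R/(x) → R'/(g(x)) is injective. -/
/-- The inclusion `(x) ≤ g⁻¹((g x))`, needed to define the induced map on quotients. -/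
lemma span_le_comap_span {R R' : Type*} [CommRing R] [CommRing R'] (g : R →+* R') (x : R) :
    Ideal.span {x} ≤ (Ideal.span {g x}).comap g := by
  rw [Ideal.span_le]
  rintro y rfl
  exact Ideal.subset_span rfl

/-- the principal localization square is cartesian iff the induced
map `ḡ : R/(x) → R'/(g x)` is injective. -/
theorem cartesian_iff_quotientMap_injective
    {R R' : Type*} [CommRing R] [CommRing R'] (g : R →+* R') (x : R)
    (hx : x ∈ nonZeroDivisors R) (hgx : g x ∈ nonZeroDivisors R')
    (φ : Localization.Away x →+* Localization.Away (g x))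
    (hφ : ∀ r : R, φ (algebraMap R (Localization.Away x) r) =
      algebraMap R' (Localization.Away (g x)) (g r)) :
    ((Function.Injective fun r : R => (algebraMap R (Localization.Away x) r, g r)) ∧
      ∀ (a : Localization.Away x) (b : R'),
        φ a = algebraMap R' (Localization.Away (g x)) b →
          ∃ r : R, algebraMap R (Localization.Away x) r = a ∧ g r = b) ↔
    Function.Injective (Ideal.quotientMap (Ideal.span {g x}) g (span_le_comap_span g x)) := by
  have hinjR : Function.Injective (algebraMap R (Localization.Away x)) :=
    IsLocalization.injective _ (Submonoid.powers_le.mpr hx)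
  have hinjR' : Function.Injective (algebraMap R' (Localization.Away (g x))) :=
    IsLocalization.injective _ (Submonoid.powers_le.mpr hgx)
  constructor
  · rintro ⟨-, hsurj⟩
    rw [injective_iff_map_eq_zero]
    intro y hy
    obtain ⟨r, rfl⟩ := Ideal.Quotient.mk_surjective y
    rw [Ideal.quotientMap_mk, Ideal.Quotient.eq_zero_iff_mem, Ideal.mem_span_singleton] at hy
    obtain ⟨c, hc⟩ := hy
    set a : Localization.Away x :=
      IsLocalization.mk' _ r (⟨x, Submonoid.mem_powers x⟩ : Submonoid.powers x) with ha_def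
    have ha : a * algebraMap R (Localization.Away x) x = algebraMap R (Localization.Away x) r :=
      IsLocalization.mk'_spec _ r (⟨x, Submonoid.mem_powers x⟩ : Submonoid.powers x)
    have hu : IsUnit (algebraMap R' (Localization.Away (g x)) (g x)) :=
      IsLocalization.map_units _ (⟨g x, Submonoid.mem_powers _⟩ : Submonoid.powers (g x))
    have hφa : φ a = algebraMap R' (Localization.Away (g x)) c := by
      apply hu.mul_right_cancel
      have := congrArg φ ha
      rw [map_mul, hφ, hφ] at this
      rw [this, hc, map_mul]
      ring
    obtain ⟨s, hs1, hs2⟩ := hsurj a c hφa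
    have hr : s * x = r := by
      apply hinjR
      rw [map_mul, hs1, ha]
    rw [Ideal.Quotient.eq_zero_iff_mem, Ideal.mem_span_singleton]
    exact ⟨s, by rw [← hr, mul_comm]⟩
  · intro hq
    refine ⟨fun r₁ r₂ h => hinjR (congrArg Prod.fst h), ?_⟩
    intro a b hab
    obtain ⟨⟨r, s⟩, hs⟩ := IsLocalization.surj (Submonoid.powers x) a
    obtain ⟨n, hn⟩ := s.2
    have key : g r = b * (g x) ^ n := by
      apply hinjR'
      have h2 := congrArg φ hs
      rw [map_mul, hφ, hφ, hab] at h2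
      rw [← h2, ← hn, map_mul, map_pow, map_pow]
    have main : ∀ (n : ℕ) (r : R), g r = b * (g x) ^ n → ∃ t, r = t * x ^ n ∧ g t = b := by
      intro n
      induction n with
      | zero => intro r hr; exact ⟨r, by simp, by simpa using hr⟩
      | succ n ih =>
        intro r hr
        have hmem : r ∈ Ideal.span {x} := by
          have h0 : Ideal.quotientMap (Ideal.span {g x}) g (span_le_comap_span g x)
              (Ideal.Quotient.mk (Ideal.span {x}) r) = 0 := by
            rw [Ideal.quotientMap_mk, Ideal.Quotient.eq_zero_iff_mem, Ideal.mem_span_singleton]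
            exact ⟨b * (g x) ^ n, by rw [hr]; ring⟩
          have := (injective_iff_map_eq_zero _).mp hq _ h0
          rwa [Ideal.Quotient.eq_zero_iff_mem] at this
        obtain ⟨r₁, hr₁⟩ := Ideal.mem_span_singleton.mp hmem
        have hgr₁ : g r₁ = b * (g x) ^ n := by
          rw [← mul_cancel_right_mem_nonZeroDivisors hgx]
          have : g x * g r₁ = b * (g x) ^ n * g x := by
            rw [← map_mul, ← hr₁, hr]; ring
          rw [← this]; ring
        obtain ⟨t, ht, htb⟩ := ih r₁ hgr₁
        exact ⟨t, by rw [hr₁, ht]; ring, htb⟩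
    obtain ⟨t, ht, htb⟩ := main n r key
    refine ⟨t, ?_, htb⟩
    have hu : IsUnit (algebraMap R (Localization.Away x) (x ^ n)) :=
      IsLocalization.map_units _ (⟨x ^ n, ⟨n, rfl⟩⟩ : Submonoid.powers x)
    apply hu.mul_right_cancel
    rw [← map_mul, ← ht, ← hs, ← hn]
end

section
/- With R, R', g, x as in the principal localization square: the square is cartesian and surjective (i.e. additionally every element of R'_{g(x)} can be written as the image of an element of R_x plus an element of R') if and only if the induced map ḡ : R/(x) → R'/(g(x)) is an isomorphism. -/
/-- the principal localization square is cartesian and surjective iff the induced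
map `ḡ : R/(x) → R'/(g x)` is an isomorphism (i.e. bijective). -/
theorem cartesian_and_surjective_iff_quotientMap_bijective
    {R R' : Type*} [CommRing R] [CommRing R'] (g : R →+* R') (x : R)
    (hx : x ∈ nonZeroDivisors R) (hgx : g x ∈ nonZeroDivisors R')
    (φ : Localization.Away x →+* Localization.Away (g x))
    (hφ : ∀ r : R, φ (algebraMap R (Localization.Away x) r) =
      algebraMap R' (Localization.Away (g x)) (g r)) :
    (((Function.Injective fun r : R => (algebraMap R (Localization.Away x) r, g r)) ∧
      ∀ (a : Localization.Away x) (b : R'),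
        φ a = algebraMap R' (Localization.Away (g x)) b →
          ∃ r : R, algebraMap R (Localization.Away x) r = a ∧ g r = b) ∧
      ∀ s : Localization.Away (g x), ∃ (a : Localization.Away x) (b : R'),
        s = φ a - algebraMap R' (Localization.Away (g x)) b) ↔
    Function.Bijective (Ideal.quotientMap (Ideal.span {g x}) g (span_le_comap_span g x)) := by
  set α := algebraMap R (Localization.Away x) with hα_def
  set β := algebraMap R' (Localization.Away (g x)) with hβ_def
  have hαinj : Function.Injective α :=
    IsLocalization.injective (Localization.Away x) (Submonoid.powers_le.mpr hx)
  have hβinj : Function.Injective β :=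
    IsLocalization.injective (Localization.Away (g x)) (Submonoid.powers_le.mpr hgx)
  have hux : IsUnit (α x) :=
    IsLocalization.map_units (Localization.Away x) ⟨x, Submonoid.mem_powers x⟩
  have hugx : IsUnit (β (g x)) :=
    IsLocalization.map_units (Localization.Away (g x)) ⟨g x, Submonoid.mem_powers (g x)⟩
  constructor
  · rintro ⟨⟨-, hcart⟩, hsurj⟩
    constructor
    · -- injective
      rw [injective_iff_map_eq_zero]
      intro rr h
      obtain ⟨r, rfl⟩ := Ideal.Quotient.mk_surjective rr
      rw [Ideal.quotientMap_mk, Ideal.Quotient.eq_zero_iff_mem, Ideal.mem_span_singleton] at h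
      obtain ⟨b, hb⟩ := h
      set a : Localization.Away x :=
        IsLocalization.mk' _ r (⟨x, Submonoid.mem_powers x⟩ : Submonoid.powers x) with ha_def
      have ha : a * α x = α r := IsLocalization.mk'_spec _ r _
      have hφa : φ a = β b := by
        apply hugx.mul_right_cancel
        calc φ a * β (g x) = φ (a * α x) := by rw [map_mul, hφ]
          _ = β (g r) := by rw [ha, hφ]
          _ = β b * β (g x) := by rw [hb, map_mul, mul_comm]
      obtain ⟨r', hr'a, hr'b⟩ := hcart a b hφa
      have : α (r' * x) = α r := by rw [map_mul, hr'a, ha]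
      have hrx : r = r' * x := (hαinj this).symm
      rw [Ideal.Quotient.eq_zero_iff_mem, Ideal.mem_span_singleton]
      exact ⟨r', by rw [hrx, mul_comm]⟩
    · -- surjective
      intro bb
      obtain ⟨b, rfl⟩ := Ideal.Quotient.mk_surjective bb
      set u : Localization.Away (g x) :=
        IsLocalization.mk' _ b (⟨g x, Submonoid.mem_powers (g x)⟩ : Submonoid.powers (g x))
        with hu_def
      have hu : u * β (g x) = β b := IsLocalization.mk'_spec _ b _
      obtain ⟨a, c, hs⟩ := hsurj u
      have key : φ (a * α x) = β (b + c * g x) := by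
        have hφax : φ a = u + β c := by rw [hs]; ring
        calc φ (a * α x) = φ a * β (g x) := by rw [map_mul, hφ]
          _ = (u + β c) * β (g x) := by rw [hφax]
          _ = β b + β (c * g x) := by rw [add_mul, hu, map_mul]
          _ = β (b + c * g x) := (map_add β _ _).symm
      obtain ⟨r, -, hrb⟩ := hcart (a * α x) (b + c * g x) key
      refine ⟨Ideal.Quotient.mk _ r, ?_⟩
      rw [Ideal.quotientMap_mk, hrb]
      rw [Ideal.Quotient.mk_eq_mk_iff_sub_mem]
      simp [Ideal.mem_span_singleton, dvd_mul_left]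
  · rintro ⟨hqinj, hqsurj⟩
    refine ⟨⟨?_, ?_⟩, ?_⟩
    · intro r r' h
      exact hαinj (congrArg Prod.fst h)
    · -- cartesian
      intro a b hab
      obtain ⟨⟨r₀, -, n, rfl⟩, hn⟩ := IsLocalization.surj (Submonoid.powers x) a
      have key : ∀ (n : ℕ) (a : Localization.Away x) (r₀ : R),
          φ a = β b → a * α (x ^ n) = α r₀ → ∃ r, α r = a ∧ g r = b := by
        intro n
        induction n with
        | zero =>
          intro a r₀ hab hn
          rw [pow_zero, map_one, mul_one] at hn
          refine ⟨r₀, hn.symm, hβinj ?_⟩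
          rw [← hφ, ← hn, hab]
        | succ n ih =>
          intro a r₀ hab hn
          have h1 : β (g r₀) = β (b * g x ^ (n + 1)) := by
            have h := congrArg φ hn
            rw [map_mul, hφ, hφ, hab] at h
            rw [← h, map_mul, map_pow, map_pow]
          have h2 : g r₀ = b * g x ^ (n + 1) := hβinj h1
          have h3 : r₀ ∈ Ideal.span {x} := by
            have hq0 : (Ideal.quotientMap (Ideal.span {g x}) g (span_le_comap_span g x))
                (Ideal.Quotient.mk _ r₀) = 0 := by
              rw [Ideal.quotientMap_mk, Ideal.Quotient.eq_zero_iff_mem,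
                Ideal.mem_span_singleton]
              exact ⟨b * g x ^ n, by rw [h2]; ring⟩
            have := hqinj (a₁ := Ideal.Quotient.mk _ r₀) (a₂ := 0) (by rw [hq0, map_zero])
            rwa [Ideal.Quotient.eq_zero_iff_mem] at this
          obtain ⟨r₁, hr₁⟩ := Ideal.mem_span_singleton.mp h3
          have h4 : (a * α (x ^ n)) * α x = α r₁ * α x := by
            rw [mul_assoc, ← map_mul, ← pow_succ, hn, hr₁, map_mul, mul_comm]
          exact ih a r₁ hab (hux.mul_right_cancel h4)
      exact key n a r₀ hab hn
    · -- surjective square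
      intro s
      obtain ⟨⟨b₀, -, n, rfl⟩, hn⟩ := IsLocalization.surj (Submonoid.powers (g x)) s
      have key : ∀ (n : ℕ) (s : Localization.Away (g x)) (b₀ : R'),
          s * β (g x ^ n) = β b₀ → ∃ a b, s = φ a - β b := by
        intro n
        induction n with
        | zero =>
          intro s b₀ hn
          rw [pow_zero, map_one, mul_one] at hn
          exact ⟨0, -b₀, by rw [map_zero, map_neg, zero_sub, neg_neg, hn]⟩
        | succ n ih =>
          intro s b₀ hn
          obtain ⟨rr, hr⟩ := hqsurj (Ideal.Quotient.mk _ b₀)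
          obtain ⟨r, rfl⟩ := Ideal.Quotient.mk_surjective rr
          rw [Ideal.quotientMap_mk, Ideal.Quotient.mk_eq_mk_iff_sub_mem,
            Ideal.mem_span_singleton] at hr
          obtain ⟨c, hc⟩ := hr
          set A : Localization.Away x :=
            IsLocalization.mk' _ r (⟨x ^ (n + 1), ⟨n + 1, rfl⟩⟩ : Submonoid.powers x) with hA_def
          have hA : A * α (x ^ (n + 1)) = α r := IsLocalization.mk'_spec _ r _
          have hφA : φ A * β (g x ^ (n + 1)) = β (g r) := by
            have h := congrArg φ hA
            rw [map_mul, hφ, hφ] at h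
            simp only [map_pow] at h ⊢
            exact h
          have ht : ((s - φ A) * β (g x ^ n)) * β (g x) = β (-c) * β (g x) := by
            rw [mul_assoc, ← map_mul, ← pow_succ, sub_mul, hn, hφA, ← map_sub, ← map_mul]
            congr 1
            linear_combination -hc
          obtain ⟨a', b', hab'⟩ := ih (s - φ A) (-c) (hugx.mul_right_cancel ht)
          refine ⟨a' + A, b', ?_⟩
          rw [map_add]
          have : s - φ A = φ a' - β b' := hab'
          linear_combination this
      exact key n s b₀ hn
end

section
/- With R, R', g, x as in the principal localization square: the induced map R/(x) → R'/(g(x)) is an isomorphism if and only if for every k ≥ 1 the induced map R/(x^k) → R'/(g(x)^k) is an isomorphism. -/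
lemma span_le_comap_span_pow {R R' : Type*} [CommRing R] [CommRing R'] (g : R →+* R')
    (x : R) (k : ℕ) : Ideal.span {x ^ k} ≤ (Ideal.span {g x ^ k}).comap g := by
  rw [Ideal.span_le]
  rintro y rfl
  exact Ideal.subset_span (by simp)

lemma bij_iff_dvd {R R' : Type*} [CommRing R] [CommRing R'] (g : R →+* R') (x : R) (k : ℕ) :
    Function.Bijective
        (Ideal.quotientMap (Ideal.span {g x ^ k}) g (span_le_comap_span_pow g x k)) ↔
      (∀ a : R, g x ^ k ∣ g a → x ^ k ∣ a) ∧ (∀ y : R', ∃ a : R, g x ^ k ∣ y - g a) := by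
  constructor
  · rintro ⟨hinj, hsurj⟩
    constructor
    · intro a ha
      have : Ideal.quotientMap (Ideal.span {g x ^ k}) g (span_le_comap_span_pow g x k)
          (Ideal.Quotient.mk _ a) = 0 := by
        rw [Ideal.quotientMap_mk, Ideal.Quotient.eq_zero_iff_mem, Ideal.mem_span_singleton]
        exact ha
      have h0 : Ideal.Quotient.mk (Ideal.span {x ^ k}) a = 0 :=
        hinj (by rw [map_zero]; exact this)
      rwa [Ideal.Quotient.eq_zero_iff_mem, Ideal.mem_span_singleton] at h0
    · intro y
      obtain ⟨q, hq⟩ := hsurj (Ideal.Quotient.mk _ y)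
      obtain ⟨a, rfl⟩ := Ideal.Quotient.mk_surjective q
      rw [Ideal.quotientMap_mk, Ideal.Quotient.eq, Ideal.mem_span_singleton] at hq
      exact ⟨a, dvd_sub_comm.mp hq⟩
  · rintro ⟨hinj, hsurj⟩
    constructor
    · rw [injective_iff_map_eq_zero]
      intro q hq
      obtain ⟨a, rfl⟩ := Ideal.Quotient.mk_surjective q
      rw [Ideal.quotientMap_mk, Ideal.Quotient.eq_zero_iff_mem, Ideal.mem_span_singleton] at hq
      rw [Ideal.Quotient.eq_zero_iff_mem, Ideal.mem_span_singleton]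
      exact hinj a hq
    · intro q
      obtain ⟨y, rfl⟩ := Ideal.Quotient.mk_surjective q
      obtain ⟨a, ha⟩ := hsurj y
      exact ⟨Ideal.Quotient.mk _ a, by
        rw [Ideal.quotientMap_mk, Ideal.Quotient.eq, Ideal.mem_span_singleton]
        exact dvd_sub_comm.mp ha⟩

/-- `ḡ : R/(x) → R'/(g x)` is an isomorphism iff for every `k ≥ 1` the induced
map `R/(x^k) → R'/(g(x)^k)` is an isomorphism. -/
theorem quotientMap_bijective_iff_pow_bijective
    {R R' : Type*} [CommRing R] [CommRing R'] (g : R →+* R') (x : R)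
    (hx : x ∈ nonZeroDivisors R) (hgx : g x ∈ nonZeroDivisors R') :
    Function.Bijective
        (Ideal.quotientMap (Ideal.span {g x ^ 1}) g (span_le_comap_span_pow g x 1)) ↔
      ∀ k : ℕ, 1 ≤ k → Function.Bijective
        (Ideal.quotientMap (Ideal.span {g x ^ k}) g (span_le_comap_span_pow g x k)) := by
  constructor
  · intro h1 k hk
    rw [bij_iff_dvd] at h1 ⊢
    obtain ⟨hinj1, hsurj1⟩ := h1
    simp only [pow_one] at hinj1 hsurj1
    induction k, hk using Nat.le_induction with
    | base => simpa using ⟨hinj1, hsurj1⟩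
    | succ k hk ih =>
      obtain ⟨ihinj, ihsurj⟩ := ih
      constructor
      · intro a ha
        have hxa : g x ∣ g a := dvd_trans (dvd_pow_self _ (by omega)) ha
        obtain ⟨b, rfl⟩ := hinj1 a hxa
        obtain ⟨z, hz⟩ := ha
        rw [map_mul, pow_succ'] at hz
        have hb : g x ^ k ∣ g b := by
          refine ⟨z, ?_⟩
          rw [← mul_cancel_left_mem_nonZeroDivisors hgx, ← mul_assoc]
          exact hz
        obtain ⟨c, rfl⟩ := ihinj b hb
        exact ⟨c, by ring⟩
      · intro y
        obtain ⟨a, z, hz⟩ := ihsurj y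
        obtain ⟨b, w, hw⟩ := hsurj1 z
        refine ⟨a + x ^ k * b, ?_⟩
        refine ⟨w, ?_⟩
        rw [map_add, map_mul, map_pow]
        linear_combination hz + g x ^ k * hw
  · intro h
    exact h 1 le_rfl
end

section
/- Let R be a commutative ring, x, y ∈ R non-zero-divisors such that y is a non-zero-divisor on R/(x). Then the square formed by R, R_x, R_y, R_{xy} (with canonical localization maps) is cartesian: if a/x^m = b/y^n in R_{xy} with a, b ∈ R, m, n ≥ 1, x ∤ a, y ∤ b, a contradiction follows; equivalently, R = R_x ∩ R_y inside R_{xy}. -/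
/-!
Write `a ∈ R_x` as `a'/x^m` and `b ∈ R_y` as `b'/y^n`. Agreement in `R_{xy}` means
`a' y^n = b' x^m` after multiplying by some `(xy)^k`, and since `x` is a non-zero-divisor the
factor `x^k` cancels, leaving `a' y^(k+n) = (y^k b') x^m`. Because `y` (hence every power of `y`)
is a non-zero-divisor modulo `x`, induction on `m` peels off one factor `x` at a time and produces
`r ∈ R` with `a' = r x^m` and `y^k b' = r y^(k+n)`; this `r` is the common preimage of `a` and `b`.
-/

section DivisibilityModulo

variable {R : Type*} [CommRing R] {x y : R}

lemma dvd_of_dvd_pow_mul (hyx : ∀ r : R, x ∣ y * r → x ∣ r) (n : ℕ) {r : R}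
    (h : x ∣ y ^ n * r) : x ∣ r := by
  induction n generalizing r with
  | zero => simpa using h
  | succ n ih => exact hyx r (ih (by rwa [← mul_assoc, ← pow_succ]))

lemma exists_eq_mul_pow_of_mul_pow_eq_mul_pow (hx : x ∈ nonZeroDivisors R)
    (hyx : ∀ r : R, x ∣ y * r → x ∣ r) (m n : ℕ) {a b : R} (h : a * y ^ n = b * x ^ m) :
    ∃ r : R, a = r * x ^ m ∧ b = r * y ^ n := by
  induction m generalizing a with
  | zero => exact ⟨a, by simp, by simpa using h.symm⟩
  | succ m ih =>
    obtain ⟨a', rfl⟩ : x ∣ a :=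
      dvd_of_dvd_pow_mul hyx n ⟨b * x ^ m, by rw [mul_comm, h, pow_succ]; ring⟩
    have h' : a' * y ^ n = b * x ^ m :=
      (mul_cancel_left_mem_nonZeroDivisors hx).mp (by rw [pow_succ] at h; linear_combination h)
    obtain ⟨r, rfl, rfl⟩ := ih h'
    exact ⟨r, by ring, rfl⟩

end DivisibilityModulo

lemma IsLocalization.Away.exists_pow_mul_eq_of_algebraMap_eq {R S : Type*} [CommRing R]
    [CommRing S] [Algebra R S] {x y : R} [IsLocalization.Away (x * y) S]
    (hx : x ∈ nonZeroDivisors R) {a b : R} (h : algebraMap R S a = algebraMap R S b) :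
    ∃ k : ℕ, y ^ k * a = y ^ k * b := by
  obtain ⟨k, hk⟩ := IsLocalization.Away.exists_of_eq (x * y) h
  refine ⟨k, (mul_cancel_left_mem_nonZeroDivisors (pow_mem hx k)).mp ?_⟩
  simpa only [mul_pow, mul_assoc] using hk

lemma IsLocalization.Away.algebraMap_eq_of_mul_pow_eq {R S : Type*} [CommRing R] [CommRing S]
    [Algebra R S] (x : R) [IsLocalization.Away x S] {z : S} {r : R} {n : ℕ}
    (h : z * algebraMap R S x ^ n = algebraMap R S (r * x ^ n)) : algebraMap R S r = z :=
  ((IsLocalization.Away.algebraMap_isUnit x).pow n).mul_left_injective <| by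
    simpa only [map_mul, map_pow] using h.symm

theorem localization_square_cartesian_general
    {R : Type*} [CommRing R] (x y : R)
    (hx : x ∈ nonZeroDivisors R)
    (hyx : ∀ r : R, x ∣ y * r → x ∣ r)
    (fx : Localization.Away x →+* Localization.Away (x * y))
    (fy : Localization.Away y →+* Localization.Away (x * y))
    (hfx : ∀ r : R, fx (algebraMap R (Localization.Away x) r) =
      algebraMap R (Localization.Away (x * y)) r)
    (hfy : ∀ r : R, fy (algebraMap R (Localization.Away y) r) =
      algebraMap R (Localization.Away (x * y)) r) :
    (Function.Injective fun r : R =>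
        (algebraMap R (Localization.Away x) r, algebraMap R (Localization.Away y) r)) ∧
      ∀ (a : Localization.Away x) (b : Localization.Away y), fx a = fy b →
        ∃ r : R, algebraMap R (Localization.Away x) r = a ∧
          algebraMap R (Localization.Away y) r = b := by
  refine ⟨fun r s h ↦ IsLocalization.injective _ (Submonoid.powers_le.mpr hx) congr($h.1), ?_⟩
  intro a b hab
  obtain ⟨m, a', ha⟩ := IsLocalization.Away.surj x a
  obtain ⟨n, b', hb⟩ := IsLocalization.Away.surj y b
  have ha' := congrArg fx ha
  have hb' := congrArg fy hb
  simp only [map_mul, map_pow, hfx, hfy] at ha' hb'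
  have hxy : algebraMap R (Localization.Away (x * y)) (a' * y ^ n) =
      algebraMap R (Localization.Away (x * y)) (b' * x ^ m) := by
    rw [map_mul, map_mul, map_pow, map_pow, ← ha', ← hb', hab]
    ring
  obtain ⟨k, hk⟩ := IsLocalization.Away.exists_pow_mul_eq_of_algebraMap_eq (y := y) hx hxy
  obtain ⟨r, rfl, hr⟩ := exists_eq_mul_pow_of_mul_pow_eq_mul_pow hx hyx m (k + n)
    (a := a') (b := y ^ k * b') (by linear_combination hk)
  refine ⟨r, IsLocalization.Away.algebraMap_eq_of_mul_pow_eq x ha,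
    IsLocalization.Away.algebraMap_eq_of_mul_pow_eq y (n := k + n) ?_⟩
  rw [← hr, map_mul, ← hb, map_pow, pow_add]
  ring

/-- if `x, y` are non-zero-divisors in `R` and `y` is a non-zero-divisor on
`R/(x)`, then the localization square `(R, R_x, R_y, R_{xy})` is cartesian. -/
theorem localization_square_cartesian
    {R : Type*} [CommRing R] (x y : R)
    (hx : x ∈ nonZeroDivisors R) (hy : y ∈ nonZeroDivisors R)
    (hyx : ∀ r : R, x ∣ y * r → x ∣ r)
    (fx : Localization.Away x →+* Localization.Away (x * y))
    (fy : Localization.Away y →+* Localization.Away (x * y))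
    (hfx : ∀ r : R, fx (algebraMap R (Localization.Away x) r) =
      algebraMap R (Localization.Away (x * y)) r)
    (hfy : ∀ r : R, fy (algebraMap R (Localization.Away y) r) =
      algebraMap R (Localization.Away (x * y)) r) :
    (Function.Injective fun r : R =>
        (algebraMap R (Localization.Away x) r, algebraMap R (Localization.Away y) r)) ∧
      ∀ (a : Localization.Away x) (b : Localization.Away y), fx a = fy b →
        ∃ r : R, algebraMap R (Localization.Away x) r = a ∧
          algebraMap R (Localization.Away y) r = b :=
  localization_square_cartesian_general x y hx hyx fx fy hfx hfy
end

section
/- Let R be a commutative ring, x, y ∈ R non-zero-divisors such that x is a non-zero-divisor on R/(y), y is a non-zero-divisor on R/(x), and the ideal (x, y) ≠ R. Then the element 1/(xy) ∈ R_{xy} does not lie in the sum of the images of R_x and R_y in R_{xy}. In particular, the localization square (R, R_x, R_y, R_{xy}) is not surjective. -/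
private lemma dvd_of_dvd_pow_mul' {R : Type*} [CommRing R] {x y : R}
    (hyx : ∀ r : R, x ∣ y * r → x ∣ r) :
    ∀ (k : ℕ) (r : R), x ∣ y ^ k * r → x ∣ r := by
  intro k
  induction k with
  | zero => intro r h; simpa using h
  | succ k ih =>
    intro r h
    refine ih r (hyx _ ?_)
    rw [← mul_assoc, ← pow_succ']
    exact h

private lemma key_lemma {R : Type*} [CommRing R] {x y : R}
    (hx : x ∈ nonZeroDivisors R) (hy : y ∈ nonZeroDivisors R)
    (hxy : ∀ r : R, y ∣ x * r → y ∣ r)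
    (hyx : ∀ r : R, x ∣ y * r → x ∣ r) :
    ∀ (n m : ℕ) (u v : R), x ^ n * y ^ m = x ^ (n + 1) * u + y ^ (m + 1) * v →
      (1 : R) ∈ Ideal.span {x, y} := by
  intro n
  induction n with
  | zero =>
    intro m
    induction m with
    | zero =>
      intro u v h
      simp only [pow_zero, pow_one, one_mul] at h
      rw [Ideal.mem_span_pair]
      exact ⟨u, v, by linear_combination -h⟩
    | succ m ih =>
      intro u v h
      have hdvd : y ∣ x ^ (0 + 1) * u := by
        have : x ^ (0 + 1) * u = y ^ (m + 1) - y ^ (m + 1 + 1) * v := by linear_combination -h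
        rw [this]
        exact dvd_sub (dvd_pow_self y m.succ_ne_zero)
          (Dvd.dvd.mul_right (dvd_pow_self y (Nat.succ_ne_zero _)) v)
      obtain ⟨u', hu'⟩ := hxy u (by simpa using hdvd)
      have hcancel : x ^ 0 * y ^ m = x ^ (0 + 1) * u' + y ^ (m + 1) * v := by
        have h2 : y * (x ^ 0 * y ^ m) = y * (x ^ (0 + 1) * u' + y ^ (m + 1) * v) := by
          rw [hu'] at h; linear_combination h
        exact (mul_cancel_left_mem_nonZeroDivisors hy).mp h2
      exact ih u' v hcancel
  | succ n ih =>
    intro m u v h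
    have hdvd : x ∣ y ^ (m + 1) * v := by
      have : y ^ (m + 1) * v = x ^ (n + 1) * y ^ m - x ^ (n + 1 + 1) * u := by
        linear_combination -h
      rw [this]
      exact dvd_sub (Dvd.dvd.mul_right (dvd_pow_self x n.succ_ne_zero) _)
        (Dvd.dvd.mul_right (dvd_pow_self x (Nat.succ_ne_zero _)) u)
    obtain ⟨v', hv'⟩ := dvd_of_dvd_pow_mul' hyx (m + 1) v hdvd
    have hcancel : x ^ n * y ^ m = x ^ (n + 1) * u + y ^ (m + 1) * v' := by
      have h2 : x * (x ^ n * y ^ m) = x * (x ^ (n + 1) * u + y ^ (m + 1) * v') := by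
        rw [hv'] at h; linear_combination h
      exact (mul_cancel_left_mem_nonZeroDivisors hx).mp h2
    exact ih m u v' hcancel

/-- under the hypotheses, `1/(xy)` does not lie in the sum of the images of
`R_x` and `R_y` in `R_{xy}`; in particular the square is not surjective. -/
theorem one_div_xy_not_in_sum
    {R : Type*} [CommRing R] (x y : R)
    (hx : x ∈ nonZeroDivisors R) (hy : y ∈ nonZeroDivisors R)
    (hxy : ∀ r : R, y ∣ x * r → y ∣ r)
    (hyx : ∀ r : R, x ∣ y * r → x ∣ r)
    (hproper : Ideal.span {x, y} ≠ (⊤ : Ideal R))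
    (fx : Localization.Away x →+* Localization.Away (x * y))
    (fy : Localization.Away y →+* Localization.Away (x * y))
    (hfx : ∀ r : R, fx (algebraMap R (Localization.Away x) r) =
      algebraMap R (Localization.Away (x * y)) r)
    (hfy : ∀ r : R, fy (algebraMap R (Localization.Away y) r) =
      algebraMap R (Localization.Away (x * y)) r)
    (s : Localization.Away (x * y))
    (hs : s * algebraMap R (Localization.Away (x * y)) (x * y) = 1) :
    ¬ ∃ (a : Localization.Away x) (b : Localization.Away y), s = fx a + fy b := by
  rintro ⟨a, b, hab⟩
  set A := algebraMap R (Localization.Away (x * y)) with hA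
  have hxyz : x * y ∈ nonZeroDivisors R := mul_mem hx hy
  have hle : Submonoid.powers (x * y) ≤ nonZeroDivisors R :=
    Submonoid.powers_le.mpr hxyz
  have hinj : Function.Injective A := IsLocalization.injective _ hle
  obtain ⟨⟨a0, sa⟩, ha⟩ := IsLocalization.surj (Submonoid.powers x) a
  obtain ⟨n, hn⟩ := sa.2
  have hn' : x ^ n = (sa : R) := hn
  obtain ⟨⟨b0, sb⟩, hb⟩ := IsLocalization.surj (Submonoid.powers y) b
  obtain ⟨m, hm⟩ := sb.2
  have hm' : y ^ m = (sb : R) := hm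
  have ha' : fx a * A (x ^ n) = A a0 := by
    have := congrArg fx ha
    rw [map_mul, hfx, hfx] at this
    rw [← hn'] at this
    exact this
  have hb' : fy b * A (y ^ m) = A b0 := by
    have := congrArg fy hb
    rw [map_mul, hfy, hfy] at this
    rw [← hm'] at this
    exact this
  have h0 : s * (A x * A y) = 1 := by rw [← map_mul]; exact hs
  have hmain : A (x ^ n * y ^ m) = A (a0 * y ^ m * (x * y) + b0 * x ^ n * (x * y)) := by
    simp only [map_add, map_mul]
    linear_combination (A (y ^ m) * A x * A y) * ha' + (A (x ^ n) * A x * A y) * hb' +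
      (A (x ^ n) * A (y ^ m) * A x * A y) * hab - (A (x ^ n) * A (y ^ m)) * h0
  have heq : x ^ n * y ^ m = a0 * y ^ m * (x * y) + b0 * x ^ n * (x * y) := hinj hmain
  have h1 : (1 : R) ∈ Ideal.span {x, y} :=
    key_lemma hx hy hxy hyx n m (b0 * y) (a0 * x) (by linear_combination heq)
  exact hproper ((Ideal.eq_top_iff_one _).mpr h1)
end

section
/- In the polynomial ring k[x, y] over a field k, the element 1/(xy) of the localization k[x,y]_{xy} is not expressible as a sum of an element in the image of k[x,y]_x and an element in the image of k[x,y]_y. -/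
open MvPolynomial

/-- in `k[x, y]`, the element `1/(xy)` of the localization `k[x,y]_{xy}` is not
a sum of an element coming from `k[x,y]_x` and an element coming from `k[x,y]_y`. -/
theorem one_div_xy_not_in_sum_polynomial
    (k : Type*) [Field k]
    (fx : Localization.Away (X 0 : MvPolynomial (Fin 2) k) →+*
      Localization.Away ((X 0 : MvPolynomial (Fin 2) k) * X 1))
    (fy : Localization.Away (X 1 : MvPolynomial (Fin 2) k) →+*
      Localization.Away ((X 0 : MvPolynomial (Fin 2) k) * X 1))
    (hfx : ∀ r : MvPolynomial (Fin 2) k,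
      fx (algebraMap _ (Localization.Away (X 0 : MvPolynomial (Fin 2) k)) r) =
        algebraMap _ (Localization.Away ((X 0 : MvPolynomial (Fin 2) k) * X 1)) r)
    (hfy : ∀ r : MvPolynomial (Fin 2) k,
      fy (algebraMap _ (Localization.Away (X 1 : MvPolynomial (Fin 2) k)) r) =
        algebraMap _ (Localization.Away ((X 0 : MvPolynomial (Fin 2) k) * X 1)) r)
    (s : Localization.Away ((X 0 : MvPolynomial (Fin 2) k) * X 1))
    (hs : s * algebraMap _ (Localization.Away ((X 0 : MvPolynomial (Fin 2) k) * X 1))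
      ((X 0 : MvPolynomial (Fin 2) k) * X 1) = 1) :
    ¬ ∃ (a : Localization.Away (X 0 : MvPolynomial (Fin 2) k))
        (b : Localization.Away (X 1 : MvPolynomial (Fin 2) k)), s = fx a + fy b := by

  rintro ⟨a, b, hab⟩
  set R := MvPolynomial (Fin 2) k with hR
  set T := Localization.Away ((X 0 : R) * X 1) with hT
  obtain ⟨⟨p, u⟩, hp⟩ := IsLocalization.surj (Submonoid.powers ((X 0 : R))) a
  obtain ⟨n, hn⟩ := u.2
  obtain ⟨⟨q, v⟩, hq⟩ := IsLocalization.surj (Submonoid.powers ((X 1 : R))) b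
  obtain ⟨m, hm⟩ := v.2
  have h1 : fx a * algebraMap R T ((X 0 : R) ^ n) = algebraMap R T p := by
    have hn' : (X 0 : R) ^ n = (u : R) := hn
    rw [← hfx, ← map_mul, hn', hp, hfx]
  have h2 : fy b * algebraMap R T ((X 1 : R) ^ m) = algebraMap R T q := by
    have hm' : (X 1 : R) ^ m = (v : R) := hm
    rw [← hfy, ← map_mul, hm', hq, hfy]
  have h3 : (fx a + fy b) * algebraMap R T ((X 0 : R) * X 1) = 1 := by
    rw [← hab]; exact hs
  have key : algebraMap R T ((X 0 : R) ^ n * X 1 ^ m)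
      = algebraMap R T (p * ((X 0 : R) * X 1 ^ (m + 1)) + q * ((X 0 : R) ^ (n + 1) * X 1)) := by
    calc algebraMap R T ((X 0 : R) ^ n * X 1 ^ m)
        = ((fx a + fy b) * algebraMap R T ((X 0 : R) * X 1))
            * algebraMap R T ((X 0 : R) ^ n * X 1 ^ m) := by rw [h3, one_mul]
      _ = (fx a * algebraMap R T ((X 0 : R) ^ n)) * algebraMap R T ((X 0 : R) * X 1 ^ (m + 1))
          + (fy b * algebraMap R T ((X 1 : R) ^ m))
            * algebraMap R T ((X 0 : R) ^ (n + 1) * X 1) := by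
          simp only [map_mul, map_pow, map_add]; ring
      _ = algebraMap R T p * algebraMap R T ((X 0 : R) * X 1 ^ (m + 1))
          + algebraMap R T q * algebraMap R T ((X 0 : R) ^ (n + 1) * X 1) := by rw [h1, h2]
      _ = _ := by simp only [map_mul, map_pow, map_add]
  have hne : ((X 0 : R) * X 1) ≠ 0 := mul_ne_zero (X_ne_zero _) (X_ne_zero _)
  have inj : Function.Injective (algebraMap R T) :=
    IsLocalization.injective T (powers_le_nonZeroDivisors_of_noZeroDivisors hne)
  have keyR := inj key
  have hc := congrArg (coeff (Finsupp.single (0 : Fin 2) n + Finsupp.single (1 : Fin 2) m)) keyR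
  have hle1 : ¬ (Finsupp.single (0 : Fin 2) 1 + Finsupp.single (1 : Fin 2) (m + 1)
      ≤ Finsupp.single (0 : Fin 2) n + Finsupp.single (1 : Fin 2) m) := by
    intro h
    have := h 1
    simp [Finsupp.single_apply] at this
  have hle2 : ¬ (Finsupp.single (0 : Fin 2) (n + 1) + Finsupp.single (1 : Fin 2) 1
      ≤ Finsupp.single (0 : Fin 2) n + Finsupp.single (1 : Fin 2) m) := by
    intro h
    have := h 0
    simp [Finsupp.single_apply] at this
  have e1 : ((X 0 : R) ^ n * X 1 ^ m)
      = monomial (Finsupp.single (0 : Fin 2) n + Finsupp.single (1 : Fin 2) m) (1 : k) := by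
    rw [X_pow_eq_monomial, X_pow_eq_monomial, monomial_mul, one_mul]
  have e2 : ((X 0 : R) * X 1 ^ (m + 1))
      = monomial (Finsupp.single (0 : Fin 2) 1 + Finsupp.single (1 : Fin 2) (m + 1)) (1 : k) := by
    rw [show (X 0 : R) = monomial (Finsupp.single (0 : Fin 2) 1) (1 : k) from rfl,
      X_pow_eq_monomial, monomial_mul, one_mul]
  have e3 : ((X 0 : R) ^ (n + 1) * X 1)
      = monomial (Finsupp.single (0 : Fin 2) (n + 1) + Finsupp.single (1 : Fin 2) 1) (1 : k) := by
    rw [show (X 1 : R) = monomial (Finsupp.single (1 : Fin 2) 1) (1 : k) from rfl,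
      X_pow_eq_monomial, monomial_mul, one_mul]
  rw [e1, coeff_add, e2, e3, coeff_mul_monomial', coeff_mul_monomial', coeff_monomial,
    if_pos rfl, if_neg hle1, if_neg hle2] at hc
  simp at hc
end

section
/- Let R be a commutative ring with the determinant-induced factorization property, and let x, y ∈ R be non-zero-divisors with y a non-zero-divisor on R/(x). Then for every n and every matrix C ∈ SL_n(R_{xy}), there exist m ≥ 0, A' ∈ Mat_n(R) with det(A') = x^{mn}, and B' ∈ Mat_n(R) with det(B') = y^{mn}, such that A'·B' = (xy)^m · C in Mat_n(R_{xy}). -/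
/-- A commutative ring has determinant-induced factorization if for every square matrix `C`
and every non-zero-divisor `b` dividing `det C` there is a factorization `C = A * B` with
`det B = b`. -/
def HasDetInducedFactorization (R : Type*) [CommRing R] : Prop :=
  ∀ (n : ℕ) (C : Matrix (Fin n) (Fin n) R) (b : R),
    b ∈ nonZeroDivisors R → b ∣ C.det →
      ∃ A B : Matrix (Fin n) (Fin n) R, B.det = b ∧ A * B = C

/-- if `R` has determinant-induced factorization, `x, y` are non-zero-divisors
and `y` is a non-zero-divisor on `R/(x)`, then every `C ∈ SL_n(R_{xy})` factors as
`(xy)^m · C = A' · B'` with `A', B'` matrices over `R`, `det A' = x^{mn}`, `det B' = y^{mn}`. -/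
theorem sl_factorization_of_detInducedFactorization
    {R : Type*} [CommRing R] (hDIF : HasDetInducedFactorization R)
    (x y : R) (hx : x ∈ nonZeroDivisors R) (hy : y ∈ nonZeroDivisors R)
    (hyx : ∀ r : R, x ∣ y * r → x ∣ r)
    (n : ℕ) (C : Matrix (Fin n) (Fin n) (Localization.Away (x * y)))
    (hC : C.det = 1) :
    ∃ (m : ℕ) (A' B' : Matrix (Fin n) (Fin n) R),
      A'.det = x ^ (m * n) ∧ B'.det = y ^ (m * n) ∧
      (A'.map (algebraMap R (Localization.Away (x * y)))) *
        (B'.map (algebraMap R (Localization.Away (x * y)))) =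
        algebraMap R (Localization.Away (x * y)) ((x * y) ^ m) • C := by
  let S := Localization.Away (x * y)
  let φ := algebraMap R S
  have hxy : x * y ∈ nonZeroDivisors R := mul_mem hx hy
  have hpow : Submonoid.powers (x * y) ≤ nonZeroDivisors R :=
    Submonoid.powers_le.mpr hxy
  have hinj : Function.Injective φ := IsLocalization.injective S hpow
  -- clear denominators
  obtain ⟨b, hb⟩ := IsLocalization.exist_integer_multiples (Submonoid.powers (x * y))
    (Finset.univ : Finset (Fin n × Fin n)) (fun p => C p.1 p.2)
  obtain ⟨m, hm⟩ := b.2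
  choose C' hC' using fun (p : Fin n × Fin n) => hb p (Finset.mem_univ p)
  set Cm : Matrix (Fin n) (Fin n) R := Matrix.of fun i j => C' (i, j) with hCm
  have hmap : Cm.map φ = φ ((x * y) ^ m) • C := by
    ext i j
    have := hC' (i, j)
    simp only [Matrix.map_apply, Matrix.smul_apply, smul_eq_mul, hCm, Matrix.of_apply]
    rw [this, ← hm, Algebra.smul_def]
  have hdetmap : φ Cm.det = φ ((x * y) ^ (m * n)) := by
    have h1 : (Cm.map φ).det = φ Cm.det := (RingHom.map_det φ Cm).symm
    rw [hmap] at h1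
    rw [← h1, Matrix.det_smul, hC, mul_one, ← map_pow, ← pow_mul, Fintype.card_fin]
  have hdet : Cm.det = (x * y) ^ (m * n) := hinj hdetmap
  have hdvd : y ^ (m * n) ∣ Cm.det := ⟨x ^ (m * n), by rw [hdet, mul_pow]; ring⟩
  obtain ⟨A, B, hBdet, hAB⟩ := hDIF n Cm (y ^ (m * n)) (pow_mem hy _) hdvd
  have hAdet : A.det = x ^ (m * n) := by
    have h2 : A.det * y ^ (m * n) = x ^ (m * n) * y ^ (m * n) := by
      rw [← hBdet, ← Matrix.det_mul, hAB, hdet, mul_pow, hBdet]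
    exact (mul_cancel_right_mem_nonZeroDivisors (pow_mem hy (m * n))).mp h2
  refine ⟨m, A, B, hAdet, hBdet, ?_⟩
  rw [← Matrix.map_mul, hAB, hmap]
end

section
/- Let R, R' be commutative rings, g : R → R', x ∈ R a non-zero-divisor with g(x) a non-zero-divisor, and suppose the principal localization square is cartesian (R = equalizer of R_x and R' over R'_{g(x)}). Suppose for an element s ∈ R'_{g(x)} there exist n ≥ 2 and invertible matrices A₁ ∈ GL_n(R_x), A₂ ∈ GL_n(R') such that h₁(A₁)·T'(s) = h₂(A₂), where T'(s) ∈ GL_n(R'_{g(x)}) has (1,1)-entry 1, (1,2)-entry s, (2,2)-entry 1, all other entries in the first two rows and first two columns zero, and an arbitrary invertible lower-right block. Then the ideal J(s) = {r ∈ R : h₁(g₁(r))·s ∈ h₁(R_x) + h₂(R')} satisfies J(s)·R_x = R_x and J(s)·R' = R'. -/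
/-- for a cartesian principal localization square, if for `s ∈ R'_{g(x)}`
there are invertible matrices `A₁` over `R_x` and `A₂` over `R'` with
`h₁(A₁)·T'(s) = h₂(A₂)`, where `T'(s)` is invertible with upper-left `2×2` block
`[[1,s],[0,1]]`, zeros in the mixed blocks, and arbitrary lower-right block, then
`J(s)·R_x = R_x` and `J(s)·R' = R'`. -/
theorem Js_generates_unit_ideal_localization
    {R R' : Type*} [CommRing R] [CommRing R'] (g : R →+* R') (x : R)
    (hx : x ∈ nonZeroDivisors R) (hgx : g x ∈ nonZeroDivisors R')
    (h₁ : Localization.Away x →+* Localization.Away (g x))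
    (hh₁ : ∀ r : R, h₁ (algebraMap R (Localization.Away x) r) =
      algebraMap R' (Localization.Away (g x)) (g r))
    -- the square is cartesian
    (hinj : Function.Injective fun r : R => (algebraMap R (Localization.Away x) r, g r))
    (himage : ∀ (a : Localization.Away x) (b : R'),
      h₁ a = algebraMap R' (Localization.Away (g x)) b →
        ∃ r : R, algebraMap R (Localization.Away x) r = a ∧ g r = b)
    (s : Localization.Away (g x))
    (n : ℕ) (hn : 2 ≤ n)
    (A₁ : Matrix (Fin n) (Fin n) (Localization.Away x))
    (A₂ : Matrix (Fin n) (Fin n) R')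
    (hA₁ : IsUnit A₁) (hA₂ : IsUnit A₂)
    (T' : Matrix (Fin n) (Fin n) (Localization.Away (g x)))
    (hT'unit : IsUnit T')
    (hT'00 : T' ⟨0, by omega⟩ ⟨0, by omega⟩ = 1)
    (hT'01 : T' ⟨0, by omega⟩ ⟨1, by omega⟩ = s)
    (hT'10 : T' ⟨1, by omega⟩ ⟨0, by omega⟩ = 0)
    (hT'11 : T' ⟨1, by omega⟩ ⟨1, by omega⟩ = 1)
    (hT'rows : ∀ i j : Fin n, (i : ℕ) < 2 → 2 ≤ (j : ℕ) → T' i j = 0)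
    (hT'cols : ∀ i j : Fin n, 2 ≤ (i : ℕ) → (j : ℕ) < 2 → T' i j = 0)
    (hfact : A₁.map h₁ * T' = A₂.map (algebraMap R' (Localization.Away (g x)))) :
    Ideal.span ((algebraMap R (Localization.Away x)) ''
        {r : R | ∃ (a : Localization.Away x) (b : R'),
          h₁ (algebraMap R (Localization.Away x) r) * s =
            h₁ a + algebraMap R' (Localization.Away (g x)) b}) = ⊤ ∧
    Ideal.span (g '' {r : R | ∃ (a : Localization.Away x) (b : R'),
          h₁ (algebraMap R (Localization.Away x) r) * s =
            h₁ a + algebraMap R' (Localization.Away (g x)) b}) = ⊤ := by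
  have hn0 : 0 < n := by omega
  have hn1 : 1 < n := by omega
  set i0 : Fin n := ⟨0, hn0⟩ with hi0
  set i1 : Fin n := ⟨1, hn1⟩ with hi1
  have hne : i0 ≠ i1 := Fin.ne_of_val_ne (by norm_num)
  -- column 0
  have hcol0 : ∀ i, h₁ (A₁ i i0) = algebraMap R' (Localization.Away (g x)) (A₂ i i0) := by
    intro i
    have h := congrFun (congrFun hfact i) i0
    rw [Matrix.mul_apply] at h
    rw [Fintype.sum_eq_single i0 (fun k hk => ?_)] at h
    · simpa [Matrix.map_apply, hT'00] using h
    · have : T' k i0 = 0 := by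
        rcases Nat.lt_or_ge (k : ℕ) 2 with hk2 | hk2
        · have : k = i1 := by
            have : (k : ℕ) ≠ 0 := fun h0 => hk (Fin.ext h0)
            exact Fin.ext (show (k : ℕ) = 1 by omega)
          rw [this]; exact hT'10
        · exact hT'cols k i0 hk2 (by simp [hi0])
      simp [Matrix.map_apply, this]
  -- column 1
  have hcol1 : ∀ i, h₁ (A₁ i i0) * s + h₁ (A₁ i i1)
      = algebraMap R' (Localization.Away (g x)) (A₂ i i1) := by
    intro i
    have h := congrFun (congrFun hfact i) i1
    rw [Matrix.mul_apply] at h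
    rw [Fintype.sum_eq_add i0 i1 hne (fun k hk => ?_)] at h
    · simpa [Matrix.map_apply, hT'01, hT'11] using h
    · have : T' k i1 = 0 := by
        have hk2 : 2 ≤ (k : ℕ) := by
          have h0 : (k : ℕ) ≠ 0 := fun h0 => hk.1 (Fin.ext h0)
          have h1 : (k : ℕ) ≠ 1 := fun h1 => hk.2 (Fin.ext h1)
          omega
        exact hT'cols k i1 hk2 (by simp [hi1])
      simp [Matrix.map_apply, this]
  -- lift column 0 to R
  choose r hr1 hr2 using fun i => himage (A₁ i i0) (A₂ i i0) (hcol0 i)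
  have hmem : ∀ i, r i ∈ {r : R | ∃ (a : Localization.Away x) (b : R'),
      h₁ (algebraMap R (Localization.Away x) r) * s =
        h₁ a + algebraMap R' (Localization.Away (g x)) b} := by
    intro i
    refine ⟨-(A₁ i i1), A₂ i i1, ?_⟩
    rw [hr1 i, map_neg]
    linear_combination hcol1 i
  constructor
  · obtain ⟨U, hU⟩ := hA₁
    rw [Ideal.eq_top_iff_one]
    have hone : (1 : Localization.Away x) = ∑ k, U.inv i0 k * A₁ k i0 := by
      have h2 := congrFun (congrFun U.inv_val i0) i0
      rw [hU, Matrix.mul_apply] at h2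
      simpa [Matrix.one_apply_eq] using h2.symm
    rw [hone]
    refine Ideal.sum_mem _ (fun k _ => Ideal.mul_mem_left _ _ (Ideal.subset_span ?_))
    exact ⟨r k, hmem k, hr1 k⟩
  · obtain ⟨V, hV⟩ := hA₂
    rw [Ideal.eq_top_iff_one]
    have hone : (1 : R') = ∑ k, V.inv i0 k * A₂ k i0 := by
      have h2 := congrFun (congrFun V.inv_val i0) i0
      rw [hV, Matrix.mul_apply] at h2
      simpa [Matrix.one_apply_eq] using h2.symm
    rw [hone]
    refine Ideal.sum_mem _ (fun k _ => Ideal.mul_mem_left _ _ (Ideal.subset_span ?_))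
    exact ⟨r k, hmem k, hr2 k⟩
end

section
/- Let R → R₁, R → R₂, R₁ → S, R₂ → S be a commutative square of commutative rings that is cartesian, and suppose for every s ∈ S there exist n and A₁ ∈ GL_n(R₁), A₂ ∈ GL_n(R₂) with h₁(A₁)·T(s) = h₂(A₂) where T(s) = [[1, s],[0,1]] ⊕ I_{n−2}. Then for every s ∈ S, the ideal J(s) = {r ∈ R : h₁(g₁(r))·s ∈ h₁(R₁) + h₂(R₂)} generates the unit ideal in both R₁ and R₂. -/
/-!
The first column of `T(s)` is the first unit vector, so the first columns of `A₁` and `A₂` agree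
in `S` and patch, by cartesianness, to a column `r` over `R`; comparing second columns gives
`h₁(A₁ k 0) · s = h₂(A₂ k 1) - h₁(A₁ k 1)`, so every `r k` lies in `J(s)`. The first column of an
invertible matrix generates the unit ideal, and its entries are the images `gᵢ (r k)`.
-/

open Matrix

theorem Matrix.ideal_eq_top_of_col_mem_of_isUnit {R n : Type*} [Semiring R] [Fintype n]
    [DecidableEq n] {A : Matrix n n R} (hA : IsUnit A) (j : n) {I : Ideal R}
    (hI : ∀ k, A k j ∈ I) : I = ⊤ := by
  obtain ⟨u, rfl⟩ := hA
  have hjj : ((u⁻¹ : (Matrix n n R)ˣ) * (u : Matrix n n R)) j j = 1 := by simp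
  rw [Ideal.eq_top_iff_one, ← hjj, mul_apply]
  exact Ideal.sum_mem _ fun k _ => Ideal.mul_mem_left _ _ (hI k)

theorem Matrix.of_ite_zero_one_eq_transvection {S : Type*} [CommRing S] {n : ℕ} (hn : 2 ≤ n)
    (s : S) :
    (Matrix.of fun i j : Fin n =>
      if i = j then 1 else if (i : ℕ) = 0 ∧ (j : ℕ) = 1 then s else 0) =
      transvection ⟨0, by omega⟩ ⟨1, hn⟩ s := by
  ext i j
  by_cases hij : i = j
  · subst hij
    simp [transvection, single_apply, Fin.ext_iff]
    omega
  · simp [transvection, single_apply, Fin.ext_iff, hij, Fin.val_ne_of_ne hij, eq_comm]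

theorem exists_lift_col_of_map_mul_transvection_eq {R R₁ R₂ S : Type*} [CommRing R]
    [CommRing R₁] [CommRing R₂] [CommRing S]
    {g₁ : R →+* R₁} {g₂ : R →+* R₂} {h₁ : R₁ →+* S} {h₂ : R₂ →+* S}
    (himage : ∀ (r₁ : R₁) (r₂ : R₂), h₁ r₁ = h₂ r₂ → ∃ r : R, g₁ r = r₁ ∧ g₂ r = r₂)
    {n : Type*} [Fintype n] [DecidableEq n] {i j : n} (hij : i ≠ j) {s : S}
    {A₁ : Matrix n n R₁} {A₂ : Matrix n n R₂}
    (hA : A₁.map h₁ * transvection i j s = A₂.map h₂) (k : n) :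
    ∃ r : R, (∃ (a : R₁) (b : R₂), h₁ (g₁ r) * s = h₁ a + h₂ b) ∧
      g₁ r = A₁ k i ∧ g₂ r = A₂ k i := by
  have hcol_i : h₁ (A₁ k i) = h₂ (A₂ k i) := by
    simpa [mul_transvection_apply_of_ne _ _ _ _ hij] using congr_fun₂ hA k i
  have hcol_j : h₁ (A₁ k j) + s * h₁ (A₁ k i) = h₂ (A₂ k j) := by
    simpa using congr_fun₂ hA k j
  obtain ⟨r, hr₁, hr₂⟩ := himage _ _ hcol_i
  refine ⟨r, ⟨-A₁ k j, A₂ k j, ?_⟩, hr₁, hr₂⟩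
  rw [hr₁, map_neg, ← hcol_j]
  ring

theorem Js_generates_unit_ideal_general
    {R R₁ R₂ S : Type*} [CommRing R] [CommRing R₁] [CommRing R₂] [CommRing S]
    (g₁ : R →+* R₁) (g₂ : R →+* R₂) (h₁ : R₁ →+* S) (h₂ : R₂ →+* S)
    (himage : ∀ (r₁ : R₁) (r₂ : R₂), h₁ r₁ = h₂ r₂ → ∃ r : R, g₁ r = r₁ ∧ g₂ r = r₂)
    (hpatch : ∀ s : S, ∃ (n : ℕ), 2 ≤ n ∧
      ∃ (A₁ : Matrix (Fin n) (Fin n) R₁) (A₂ : Matrix (Fin n) (Fin n) R₂),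
        IsUnit A₁ ∧ IsUnit A₂ ∧
        A₁.map h₁ * (Matrix.of fun i j : Fin n =>
          if i = j then 1 else if (i : ℕ) = 0 ∧ (j : ℕ) = 1 then s else 0) = A₂.map h₂) :
    ∀ s : S,
      Ideal.span (g₁ '' {r : R | ∃ (a : R₁) (b : R₂), h₁ (g₁ r) * s = h₁ a + h₂ b}) = ⊤ ∧
      Ideal.span (g₂ '' {r : R | ∃ (a : R₁) (b : R₂), h₁ (g₁ r) * s = h₁ a + h₂ b}) = ⊤ := by
  intro s
  obtain ⟨n, hn, A₁, A₂, hA₁, hA₂, hA⟩ := hpatch s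
  rw [of_ite_zero_one_eq_transvection hn] at hA
  choose r hrJ hr₁ hr₂ using
    exists_lift_col_of_map_mul_transvection_eq himage (by simp [Fin.ext_iff]) hA
  exact ⟨ideal_eq_top_of_col_mem_of_isUnit hA₁ _ fun k => by
      rw [← hr₁ k]; exact Ideal.subset_span ⟨r k, hrJ k, rfl⟩,
    ideal_eq_top_of_col_mem_of_isUnit hA₂ _ fun k => by
      rw [← hr₂ k]; exact Ideal.subset_span ⟨r k, hrJ k, rfl⟩⟩

/-- in a cartesian commutative square, if every `T(s) = [[1,s],[0,1]] ⊕ I`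
is a product `h₁(A₁)⁻¹·h₂(A₂)` of invertible matrices over `R₁` and `R₂`, then the ideal
`J(s)` generates the unit ideal in both `R₁` and `R₂`. -/
theorem Js_generates_unit_ideal
    {R R₁ R₂ S : Type*} [CommRing R] [CommRing R₁] [CommRing R₂] [CommRing S]
    (g₁ : R →+* R₁) (g₂ : R →+* R₂) (h₁ : R₁ →+* S) (h₂ : R₂ →+* S)
    (hcomm : h₁.comp g₁ = h₂.comp g₂)
    (hinj : Function.Injective fun r : R => (g₁ r, g₂ r))
    (himage : ∀ (r₁ : R₁) (r₂ : R₂), h₁ r₁ = h₂ r₂ → ∃ r : R, g₁ r = r₁ ∧ g₂ r = r₂)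
    (hpatch : ∀ s : S, ∃ (n : ℕ), 2 ≤ n ∧
      ∃ (A₁ : Matrix (Fin n) (Fin n) R₁) (A₂ : Matrix (Fin n) (Fin n) R₂),
        IsUnit A₁ ∧ IsUnit A₂ ∧
        A₁.map h₁ * (Matrix.of fun i j : Fin n =>
          if i = j then 1 else if (i : ℕ) = 0 ∧ (j : ℕ) = 1 then s else 0) = A₂.map h₂) :
    ∀ s : S,
      Ideal.span (g₁ '' {r : R | ∃ (a : R₁) (b : R₂), h₁ (g₁ r) * s = h₁ a + h₂ b}) = ⊤ ∧
      Ideal.span (g₂ '' {r : R | ∃ (a : R₁) (b : R₂), h₁ (g₁ r) * s = h₁ a + h₂ b}) = ⊤ :=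
  Js_generates_unit_ideal_general g₁ g₂ h₁ h₂ himage hpatch
end

section
/- Let g : R → R' be a ring homomorphism of commutative rings, x ∈ R a non-zero-divisor with g(x) a non-zero-divisor, and suppose the induced map ḡ : R/(x) → R'/(g(x)) is injective. If a ∈ R' and a = g(r)/g(x)^k in R'_{g(x)} for some r ∈ R, k ≥ 0, then a ∈ g(R). -/
/-- if `ḡ : R/(x) → R'/(g x)` is injective, then any `a ∈ R'` which equals
`g(r)/g(x)^k` in `R'_{g(x)}` already lies in `g(R)`. -/
theorem mem_range_of_eq_div_pow
    {R R' : Type*} [CommRing R] [CommRing R'] (g : R →+* R') (x : R)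
    (hx : x ∈ nonZeroDivisors R) (hgx : g x ∈ nonZeroDivisors R')
    (hinj : Function.Injective
      (Ideal.quotientMap (Ideal.span {g x}) g (span_le_comap_span g x)))
    (a : R') (r : R) (k : ℕ)
    (h : algebraMap R' (Localization.Away (g x)) (a * g x ^ k) =
      algebraMap R' (Localization.Away (g x)) (g r)) :
    a ∈ Set.range g := by
  have hloc : Function.Injective (algebraMap R' (Localization.Away (g x))) :=
    IsLocalization.injective _ (Submonoid.powers_le.mpr hgx)
  have heq : a * g x ^ k = g r := hloc h
  clear h
  induction k generalizing a r with
  | zero => exact ⟨r, by simpa using heq.symm⟩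
  | succ k ih =>
    have hmem : g r ∈ Ideal.span {g x} := by
      rw [← heq, Ideal.mem_span_singleton]
      exact ⟨a * g x ^ k, by ring⟩
    have h0 : Ideal.quotientMap (Ideal.span {g x}) g (span_le_comap_span g x)
        (Ideal.Quotient.mk _ r) = 0 := by
      rw [Ideal.quotientMap_mk]
      exact (Ideal.Quotient.eq_zero_iff_mem).mpr hmem
    have hr : (Ideal.Quotient.mk (Ideal.span {x}) r) = 0 := hinj (by simpa using h0)
    obtain ⟨r₁, hr₁⟩ := Ideal.mem_span_singleton.mp (Ideal.Quotient.eq_zero_iff_mem.mp hr)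
    apply ih a r₁
    have : g x * (a * g x ^ k) = g x * g r₁ := by
      rw [show g x * (a * g x ^ k) = a * g x ^ (k + 1) by ring, heq, hr₁, map_mul]
    exact mul_cancel_left_mem_nonZeroDivisors hgx |>.mp this
end

section
/- Let g : R → R' be a homomorphism of commutative rings, x ∈ R a non-zero-divisor with g(x) a non-zero-divisor, the principal localization square cartesian and surjective (i.e., every element of R'_{g(x)} is a sum of images from R_x and R'). Then ḡ : R/(x) → R'/(g(x)) is surjective: for every r' ∈ R' there exists r ∈ R with r' − g(r) ∈ g(x)·R'. -/
/-- if the principal localization square is cartesian and surjective, then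
`ḡ : R/(x) → R'/(g x)` is surjective: every `r' ∈ R'` is congruent to some `g r`
modulo `g(x)·R'`. -/
theorem quotientMap_surjective_of_cartesian_surjective
    {R R' : Type*} [CommRing R] [CommRing R'] (g : R →+* R') (x : R)
    (hx : x ∈ nonZeroDivisors R) (hgx : g x ∈ nonZeroDivisors R')
    (φ : Localization.Away x →+* Localization.Away (g x))
    (hφ : ∀ r : R, φ (algebraMap R (Localization.Away x) r) =
      algebraMap R' (Localization.Away (g x)) (g r))
    (hinj : Function.Injective fun r : R => (algebraMap R (Localization.Away x) r, g r))
    (himage : ∀ (a : Localization.Away x) (b : R'),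
      φ a = algebraMap R' (Localization.Away (g x)) b →
        ∃ r : R, algebraMap R (Localization.Away x) r = a ∧ g r = b)
    (hsurj : ∀ s : Localization.Away (g x), ∃ (a : Localization.Away x) (b : R'),
      s = φ a - algebraMap R' (Localization.Away (g x)) b) :
    ∀ r' : R', ∃ r : R, r' - g r ∈ Ideal.span {g x} := by
  intro r'
  set ι := algebraMap R' (Localization.Away (g x))
  set ιx := algebraMap R (Localization.Away x)
  have hu : ι (g x) * IsLocalization.Away.invSelf (g x) = 1 :=
    IsLocalization.Away.mul_invSelf (g x)
  obtain ⟨a, b, hs⟩ := hsurj (ι r' * IsLocalization.Away.invSelf (g x))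
  have key : φ (a * ιx x) = ι (r' + b * g x) := by
    have h1 : ι r' = (φ a - ι b) * ι (g x) := by
      calc ι r' = ι r' * (ι (g x) * IsLocalization.Away.invSelf (g x)) := by rw [hu, mul_one]
        _ = (ι r' * IsLocalization.Away.invSelf (g x)) * ι (g x) := by ring
        _ = (φ a - ι b) * ι (g x) := by rw [← hs]
    rw [map_mul, hφ, map_add, map_mul]
    rw [h1]
    ring
  obtain ⟨r, _, hr⟩ := himage _ _ key
  refine ⟨r, ?_⟩
  rw [hr, Ideal.mem_span_singleton]
  exact ⟨-b, by ring⟩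
end

section
/- Let g : R → R' be a homomorphism of commutative rings, x ∈ R and g(x) ∈ R' non-zero-divisors. If the induced map ḡ₁ : R/(x) → R'/(g(x)) is an isomorphism, then for every k ≥ 1 the induced map ḡ_k : R/(x^k) → R'/(g(x)^k) is injective: if g(r) ∈ (g(x)^k) then r ∈ (x^k). -/
/-- if `ḡ₁ : R/(x) → R'/(g x)` is an isomorphism, then for every `k ≥ 1`,
`g r ∈ (g(x)^k)` implies `r ∈ (x^k)` (injectivity of `ḡ_k`). -/
theorem quotientMap_pow_injective
    {R R' : Type*} [CommRing R] [CommRing R'] (g : R →+* R') (x : R)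
    (hx : x ∈ nonZeroDivisors R) (hgx : g x ∈ nonZeroDivisors R')
    (hbij : Function.Bijective
      (Ideal.quotientMap (Ideal.span {g x}) g (span_le_comap_span g x))) :
    ∀ k : ℕ, 1 ≤ k → ∀ r : R,
      g r ∈ Ideal.span {g x ^ k} → r ∈ Ideal.span {x ^ k} := by
  have h1 : ∀ r : R, g r ∈ Ideal.span {g x} → r ∈ Ideal.span {x} := by
    intro r hr
    have h0 : Ideal.quotientMap (Ideal.span {g x}) g (span_le_comap_span g x)
        (Ideal.Quotient.mk _ r) = Ideal.quotientMap (Ideal.span {g x}) g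
        (span_le_comap_span g x) (Ideal.Quotient.mk _ 0) := by
      rw [Ideal.quotientMap_mk, Ideal.quotientMap_mk, map_zero, map_zero,
        Ideal.Quotient.eq_zero_iff_mem]
      exact hr
    have := hbij.1 h0
    rwa [map_zero, Ideal.Quotient.eq_zero_iff_mem] at this
  have key : ∀ k : ℕ, ∀ r : R, g r ∈ Ideal.span {g x ^ k} → r ∈ Ideal.span {x ^ k} := by
    intro k
    induction k with
    | zero => intro r _; simp [Ideal.span_singleton_one]
    | succ n ih =>
      intro r hr
      rw [Ideal.mem_span_singleton] at hr
      obtain ⟨t, ht⟩ := hr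
      have hr1 : r ∈ Ideal.span {x} := by
        apply h1
        rw [Ideal.mem_span_singleton]
        exact dvd_trans (dvd_pow_self (g x) n.succ_ne_zero) ⟨t, ht⟩
      rw [Ideal.mem_span_singleton] at hr1
      obtain ⟨s, hs⟩ := hr1
      have hsn : g s = g x ^ n * t := by
        have hcancel : g x * g s = g x * (g x ^ n * t) := by
          rw [← map_mul, ← hs, ht, pow_succ]
          ring
        exact (mul_cancel_left_mem_nonZeroDivisors hgx).mp hcancel
      have := ih s (by rw [Ideal.mem_span_singleton]; exact ⟨t, hsn⟩)
      rw [Ideal.mem_span_singleton] at this ⊢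
      obtain ⟨u, hu⟩ := this
      exact ⟨u, by rw [hs, hu, pow_succ]; ring⟩
  intro k _ r
  exact key k r
end

section
/- Let Q be a Euclidean domain, Q' a subring of the fraction field Frac(Q) containing Q. Then for every X ∈ Mat_n(Q') with det(X) = 0, there exist U₀, V₀ ∈ SL_n(Q) (products of transvections over Q) such that the first row of U₀·X·V₀ is zero. (Any singular matrix over Q' can be row/column reduced by matrices defined over Q to have a zero row.) -/
open Matrix

lemma vecMul_transvection {R : Type*} [CommRing R] {n : Type*} [Fintype n] [DecidableEq n]
    (v : n → R) (i j : n) (c : R) (k : n) :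
    (v ᵥ* Matrix.transvection i j c) k = if k = j then v j + c * v i else v k := by
  simp only [Matrix.transvection, Matrix.vecMul, dotProduct, Matrix.add_apply,
    Matrix.one_apply, Matrix.single, mul_add, Finset.sum_add_distrib, mul_ite,
    mul_one, mul_zero, Finset.sum_ite_eq', Finset.mem_univ, if_true]
  split
  · subst k
    simp [Finset.sum_ite_eq, eq_comm, mul_comm]
  · rename_i h
    have : ∀ x : n, (if i = x ∧ j = k then v x * c else 0) = 0 := by
      intro x
      rw [if_neg]
      rintro ⟨-, hjk⟩
      exact h hjk.symm
    simp [this]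

lemma vecMul_tv_cons {R : Type*} [CommRing R] {n : Type*} [Fintype n] [DecidableEq n]
    (v : n → R) (t : Matrix.TransvectionStruct n R) (L : List (Matrix.TransvectionStruct n R)) :
    v ᵥ* ((t :: L).map Matrix.TransvectionStruct.toMatrix).prod
      = (v ᵥ* t.toMatrix) ᵥ* (L.map Matrix.TransvectionStruct.toMatrix).prod := by
  rw [List.map_cons, List.prod_cons, ← Matrix.vecMul_vecMul]

lemma pair_reduce {Q : Type*} [EuclideanDomain Q] [DecidableEq Q] {n : Type*}
    [Fintype n] [DecidableEq n] (a b : Q) :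
    ∀ (i j : n), i ≠ j → ∀ s t : Q, (s = 1 ∨ s = -1) → (t = 1 ∨ t = -1) →
    ∃ L : List (Matrix.TransvectionStruct n Q),
      ∀ v : n → Q, v i = s * a → v j = t * b →
        ((v ᵥ* (L.map Matrix.TransvectionStruct.toMatrix).prod) j = 0 ∧
        ∀ k, k ≠ i → k ≠ j → (v ᵥ* (L.map Matrix.TransvectionStruct.toMatrix).prod) k = v k) := by
  induction a, b using EuclideanDomain.GCD.induction with
  | H0 b =>
    intro i j hij s t hs ht
    refine ⟨[⟨j, i, Ne.symm hij, 1⟩, ⟨i, j, hij, -1⟩], fun v hvi hvj => ?_⟩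
    rw [vecMul_tv_cons, vecMul_tv_cons]
    set w := v ᵥ* (Matrix.TransvectionStruct.toMatrix ⟨j, i, Ne.symm hij, 1⟩)
    have hw : ∀ k, w k = if k = i then v i + 1 * v j else v k := fun k =>
      vecMul_transvection v j i 1 k
    simp only [List.map_nil, List.prod_nil, Matrix.vecMul_one]
    set w2 := w ᵥ* (Matrix.TransvectionStruct.toMatrix ⟨i, j, hij, -1⟩)
    have hw2 : ∀ k, w2 k = if k = j then w j + (-1) * w i else w k := fun k =>
      vecMul_transvection w i j (-1) k
    constructor
    · rw [hw2, if_pos rfl, hw, if_neg (Ne.symm hij), hw, if_pos rfl, hvi, hvj]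
      ring
    · intro k hki hkj
      rw [hw2, if_neg hkj, hw, if_neg hki]
  | H1 a b ha IH =>
    intro i j hij s t hs ht
    have hs2 : s * s = 1 := by rcases hs with h | h <;> simp [h]
    -- step 1: transvection making v j = t * (b % a)
    obtain ⟨L, hL⟩ := IH i j hij t (-s) ht (by rcases hs with h | h <;> simp [h])
    refine ⟨⟨i, j, hij, -(s * t * (b / a))⟩ :: ⟨j, i, Ne.symm hij, 1⟩ ::
      ⟨i, j, hij, -1⟩ :: ⟨j, i, Ne.symm hij, 1⟩ :: L, fun v hvi hvj => ?_⟩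
    rw [vecMul_tv_cons, vecMul_tv_cons, vecMul_tv_cons, vecMul_tv_cons]
    set w1 := v ᵥ* (Matrix.TransvectionStruct.toMatrix ⟨i, j, hij, -(s * t * (b / a))⟩) with hw1def
    have hw1 : ∀ k, w1 k = if k = j then v j + (-(s * t * (b / a))) * v i else v k := fun k =>
      vecMul_transvection v i j _ k
    -- now w1 i = s * a, w1 j = t * (b % a)
    have hw1i : w1 i = s * a := by rw [hw1, if_neg hij, hvi]
    have hw1j : w1 j = t * (b % a) := by
      rw [hw1, if_pos rfl, hvi, hvj, EuclideanDomain.mod_eq_sub_mul_div]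
      linear_combination (-(t * a * (b / a))) * hs2
    -- swap: (x, y) at (i,j) ↦ (y, -x)
    set w2 := w1 ᵥ* (Matrix.TransvectionStruct.toMatrix ⟨j, i, Ne.symm hij, 1⟩) with hw2def
    have hw2 : ∀ k, w2 k = if k = i then w1 i + 1 * w1 j else w1 k := fun k =>
      vecMul_transvection w1 j i 1 k
    set w3 := w2 ᵥ* (Matrix.TransvectionStruct.toMatrix ⟨i, j, hij, -1⟩) with hw3def
    have hw3 : ∀ k, w3 k = if k = j then w2 j + (-1) * w2 i else w2 k := fun k =>
      vecMul_transvection w2 i j (-1) k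
    set w4 := w3 ᵥ* (Matrix.TransvectionStruct.toMatrix ⟨j, i, Ne.symm hij, 1⟩) with hw4def
    have hw4 : ∀ k, w4 k = if k = i then w3 i + 1 * w3 j else w3 k := fun k =>
      vecMul_transvection w3 j i 1 k
    have hw4i : w4 i = t * (b % a) := by
      rw [hw4, if_pos rfl, hw3, if_neg hij, hw3, if_pos rfl, hw2, if_pos rfl,
        hw2, if_neg (Ne.symm hij), hw1i, hw1j]; ring
    have hw4j : w4 j = (-s) * a := by
      rw [hw4, if_neg (Ne.symm hij), hw3, if_pos rfl, hw2, if_neg (Ne.symm hij),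
        hw2, if_pos rfl, hw1i, hw1j]; ring
    have hw4k : ∀ k, k ≠ i → k ≠ j → w4 k = v k := by
      intro k hki hkj
      rw [hw4, if_neg hki, hw3, if_neg hkj, hw2, if_neg hki, hw1, if_neg hkj]
    obtain ⟨h1, h2⟩ := hL w4 hw4i hw4j
    exact ⟨h1, fun k hki hkj => (h2 k hki hkj).trans (hw4k k hki hkj)⟩

lemma zero_out {Q : Type*} [EuclideanDomain Q] [DecidableEq Q] {n : Type*}
    [Fintype n] [DecidableEq n] (i₀ : n) (s : Finset n) (hs : i₀ ∉ s) :
    ∀ v : n → Q, ∃ L : List (Matrix.TransvectionStruct n Q),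
      ∀ k ∈ s, (v ᵥ* (L.map Matrix.TransvectionStruct.toMatrix).prod) k = 0 := by
  induction s using Finset.induction with
  | empty => exact fun v => ⟨[], by simp⟩
  | @insert k s hk IH =>
    intro v
    have hi₀k : i₀ ≠ k := fun h => hs (h ▸ Finset.mem_insert_self k s)
    have hi₀s : i₀ ∉ s := fun h => hs (Finset.mem_insert_of_mem h)
    obtain ⟨L₁, hL₁⟩ := IH hi₀s v
    set w := v ᵥ* (L₁.map Matrix.TransvectionStruct.toMatrix).prod with hwdef
    obtain ⟨L₂, hL₂⟩ := pair_reduce (w i₀) (w k) i₀ k hi₀k 1 1 (Or.inl rfl) (Or.inl rfl)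
    obtain ⟨h1, h2⟩ := hL₂ w (one_mul _).symm (one_mul _).symm
    refine ⟨L₁ ++ L₂, ?_⟩
    have hsplit : v ᵥ* ((L₁ ++ L₂).map Matrix.TransvectionStruct.toMatrix).prod
        = w ᵥ* (L₂.map Matrix.TransvectionStruct.toMatrix).prod := by
      rw [List.map_append, List.prod_append, ← Matrix.vecMul_vecMul, hwdef]
    rw [hsplit]
    intro k' hk'
    rcases Finset.mem_insert.mp hk' with h | h
    · exact h ▸ h1
    · have hk'i₀ : k' ≠ i₀ := fun hh => hi₀s (hh ▸ h)
      have hk'k : k' ≠ k := fun hh => hk (hh ▸ h)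
      rw [h2 k' hk'i₀ hk'k]
      exact hL₁ k' h

/-- let `Q` be a Euclidean domain and `Q'` a subring of `Frac(Q)` containing
`Q`. Every singular matrix with entries in `Q'` can be reduced, by products of transvections
defined over `Q`, to a matrix whose first row is zero. -/
theorem exists_transvections_zero_first_row
    {Q : Type*} [EuclideanDomain Q] [DecidableEq Q]
    (Q' : Subring (FractionRing Q))
    (hQ' : Set.range (algebraMap Q (FractionRing Q)) ⊆ (Q' : Set (FractionRing Q)))
    (n : ℕ) (hn : 0 < n)
    (X : Matrix (Fin n) (Fin n) (FractionRing Q))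
    (hX : ∀ i j, X i j ∈ Q') (hdet : X.det = 0) :
    ∃ (L L' : List (Matrix.TransvectionStruct (Fin n) Q)),
      ∀ j : Fin n,
        (((L.map Matrix.TransvectionStruct.toMatrix).prod.map
            (algebraMap Q (FractionRing Q))) * X *
          ((L'.map Matrix.TransvectionStruct.toMatrix).prod.map
            (algebraMap Q (FractionRing Q)))) ⟨0, hn⟩ j = 0 := by
  classical
  set f : Q →+* FractionRing Q := algebraMap Q (FractionRing Q) with hf
  have hfinj : Function.Injective f := IsFractionRing.injective Q (FractionRing Q)
  -- clear denominators
  obtain ⟨b, hb⟩ := IsLocalization.exist_integer_multiples (nonZeroDivisors Q)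
    Finset.univ (fun p : Fin n × Fin n => X p.1 p.2)
  have hb' : ∀ p : Fin n × Fin n, ∃ m : Q, f m = (b : Q) • X p.1 p.2 := by
    intro p
    obtain ⟨m, hm⟩ := hb p (Finset.mem_univ p)
    exact ⟨m, hm⟩
  choose Mf hMf using hb'
  set M : Matrix (Fin n) (Fin n) Q := Matrix.of (fun i j => Mf (i, j)) with hMdef
  have hmap : M.map f = f b • X := by
    ext i j
    simp only [Matrix.map_apply, Matrix.smul_apply, smul_eq_mul, hMdef, Matrix.of_apply]
    rw [hMf (i, j)]
    rw [Algebra.smul_def]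
  -- determinant of M is zero
  have hdetM : M.det = 0 := by
    apply hfinj
    rw [map_zero, RingHom.map_det, RingHom.mapMatrix_apply, hmap, Matrix.det_smul, hdet,
      mul_zero]
  obtain ⟨v, hv0, hvM⟩ := Matrix.exists_vecMul_eq_zero_iff.mpr hdetM
  set i₀ : Fin n := ⟨0, hn⟩ with hi₀
  obtain ⟨L, hL⟩ := zero_out i₀ (Finset.univ.erase i₀) (Finset.notMem_erase i₀ _) v
  set P := (L.map Matrix.TransvectionStruct.toMatrix).prod with hPdef
  set w := v ᵥ* P with hwdef
  have hw : ∀ k, k ≠ i₀ → w k = 0 := fun k hk =>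
    hL k (Finset.mem_erase.mpr ⟨hk, Finset.mem_univ k⟩)
  set L₀ : List (Matrix.TransvectionStruct (Fin n) Q) :=
    L.reverse.map Matrix.TransvectionStruct.inv with hL₀def
  set U := (L₀.map Matrix.TransvectionStruct.toMatrix).prod with hUdef
  have hPU : P * U = 1 := by
    rw [hUdef, hL₀def, List.map_map]
    exact Matrix.TransvectionStruct.prod_mul_reverse_inv_prod L
  have hvU : w ᵥ* U = v := by
    rw [hwdef, Matrix.vecMul_vecMul, hPU, Matrix.vecMul_one]
  have hwi₀ : w i₀ ≠ 0 := by
    intro h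
    apply hv0
    have hwz : w = 0 := by
      funext k
      by_cases hk : k = i₀
      · rw [hk, h]; rfl
      · rw [hw k hk]; rfl
    rw [← hvU, hwz, Matrix.zero_vecMul]
  have key : ∀ j, (U * M) i₀ j = 0 := by
    intro j
    have h1 : w ᵥ* (U * M) = 0 := by
      rw [← Matrix.vecMul_vecMul, hvU, hvM]
    have h2 : (w ᵥ* (U * M)) j = w i₀ * (U * M) i₀ j := by
      rw [Matrix.vecMul]
      rw [show (w ⬝ᵥ fun k => (U * M) k j) = ∑ k, w k * (U * M) k j from rfl]
      exact Finset.sum_eq_single i₀ (fun k _ hk => by rw [hw k hk, zero_mul]) (by simp)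
    have := h2.symm.trans (congrFun h1 j)
    rcases mul_eq_zero.mp this with h | h
    · exact absurd h hwi₀
    · exact h
  refine ⟨L₀, [], fun j => ?_⟩
  simp only [List.map_nil, List.prod_nil, Matrix.map_one f (map_zero f) (map_one f),
    Matrix.mul_one]
  have h0 : ((U * M).map f) i₀ j = 0 := by
    rw [Matrix.map_apply, key j, map_zero]
  rw [Matrix.map_mul, hmap, Matrix.mul_smul, Matrix.smul_apply, smul_eq_mul] at h0
  have hbne : f b ≠ 0 := by
    intro h
    exact nonZeroDivisors.coe_ne_zero b (hfinj (h.trans (map_zero f).symm))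
  rcases mul_eq_zero.mp h0 with h | h
  · exact absurd h hbne
  · exact h
end
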